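/- arXiv:2502.18404 — 7 statements merged into one kernel-verified Lean document; each statement's English description precedes it below -/
import Mathlib

section
/- For all n ∈ ℕ, all v1 ≥ 1, and all v2 with 1 ≤ v2 ≤ v1 (or v2 = ∞), the iterates satisfy V_{n}(v1, v2) ≤ V_{n}(v1+1, v2), i.e., V_n is monotonically increasing in the age of the monitor v1. Moreover, for 1 ≤ v2 < v2' ≤ v1, V_n(v1, v2) ≤ V_n(v1, v2'), and V_n(v1, v2) ≤ V_n(v1, ∞). -/
/-- Value-iteration iterates for the sampling CMDP.  States are `(v1, v2)` with
`v2 : Option ℕ` (`none` meaning the transmitter holds no packet, `v2 = ∞`). -/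
noncomputable def V (α q lam : ℝ) : ℕ → ℕ → Option ℕ → ℝ
  | 0, _, _ => 0
  | n + 1, v1, v2 =>
      (v1 : ℝ) +
        min
          (lam + α * ((1 - q) * V α q lam n (v1 + 1) (some 1) +
            q * V α q lam n 1 none))
          (match v2 with
            | some w => α * ((1 - q) * V α q lam n (v1 + 1) (some (w + 1)) +
                q * V α q lam n (w + 1) none)
            | none => α * V α q lam n (v1 + 1) none)

/-!
Induction on `n`. One Bellman update is monotone in the previous iterate, and the successor states
`(v1 + 1, 1)`, `(v1 + 1, v2 + 1)`, `(v2 + 1, ∞)`, `(v1 + 1, ∞)` are ordered like the states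
`(v1, v2)` they come from. Comparing with `(v1, ∞)` needs `v2 + 1 ≤ v1 + 1`, so the invariant is
stated on the states with `v2 ≤ v1`.
-/

section

variable {α q lam : ℝ}

theorem V_succ_some (n v1 w : ℕ) :
    V α q lam (n + 1) v1 (some w) =
      v1 + min (lam + α * ((1 - q) * V α q lam n (v1 + 1) (some 1) + q * V α q lam n 1 none))
        (α * ((1 - q) * V α q lam n (v1 + 1) (some (w + 1)) + q * V α q lam n (w + 1) none)) :=
  rfl

theorem V_succ_none (n v1 : ℕ) :
    V α q lam (n + 1) v1 none =
      v1 + min (lam + α * ((1 - q) * V α q lam n (v1 + 1) (some 1) + q * V α q lam n 1 none))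
        (α * V α q lam n (v1 + 1) none) :=
  rfl

structure AgeMonotone (f : ℕ → Option ℕ → ℝ) : Prop where
  succ_some : ∀ v1 v2 : ℕ, v2 ≤ v1 → f v1 (some v2) ≤ f (v1 + 1) (some v2)
  monotone_none : Monotone fun v1 => f v1 none
  some_mono : ∀ v1 v2 v2' : ℕ, v2 ≤ v2' → v2' ≤ v1 → f v1 (some v2) ≤ f v1 (some v2')
  some_le_none : ∀ v1 v2 : ℕ, v2 ≤ v1 → f v1 (some v2) ≤ f v1 none

theorem AgeMonotone.V_succ (hα : 0 ≤ α) (hq0 : 0 ≤ q) (hq1 : q ≤ 1) {n : ℕ}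
    (h : AgeMonotone (V α q lam n)) : AgeMonotone (V α q lam (n + 1)) := by
  have hq : 0 ≤ 1 - q := sub_nonneg.2 hq1
  refine ⟨fun v1 v2 hv => ?_, monotone_nat_of_le_succ fun v1 => ?_,
    fun v1 v2 v2' hv hv' => ?_, fun v1 v2 hv => ?_⟩
  · rw [V_succ_some, V_succ_some]
    gcongr
    · exact v1.le_succ
    · exact h.succ_some _ _ (by omega)
    · exact h.succ_some _ _ (by omega)
  · simp only [V_succ_none]
    gcongr
    · exact v1.le_succ
    · exact h.succ_some _ _ (by omega)
    · exact h.monotone_none (by omega)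
  · rw [V_succ_some, V_succ_some]
    gcongr
    · exact h.some_mono _ _ _ (by omega) (by omega)
    · exact h.monotone_none (by omega)
  · rw [V_succ_some, V_succ_none]
    gcongr _ + min _ ?_
    calc α * ((1 - q) * V α q lam n (v1 + 1) (some (v2 + 1)) + q * V α q lam n (v2 + 1) none)
        ≤ α * ((1 - q) * V α q lam n (v1 + 1) none + q * V α q lam n (v1 + 1) none) := by
          gcongr
          · exact h.some_le_none _ _ (by omega)
          · exact h.monotone_none (by omega)
      _ = α * V α q lam n (v1 + 1) none := by ring

theorem ageMonotone_V (hα : 0 ≤ α) (hq0 : 0 ≤ q) (hq1 : q ≤ 1) (n : ℕ) :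
    AgeMonotone (V α q lam n) := by
  induction n with
  | zero => exact ⟨fun _ _ _ => le_rfl, fun _ _ _ => le_rfl, fun _ _ _ _ _ => le_rfl,
      fun _ _ _ => le_rfl⟩
  | succ n ih => exact ih.V_succ hα hq0 hq1

end

theorem V_monotone_general (α q lam : ℝ) (hα0 : 0 < α)
    (hq0 : 0 < q) (hq1 : q ≤ 1) (n : ℕ) :
    (∀ v1 : ℕ, 1 ≤ v1 →
      (∀ v2 : ℕ, 1 ≤ v2 → v2 ≤ v1 →
        V α q lam n v1 (some v2) ≤ V α q lam n (v1 + 1) (some v2)) ∧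
      V α q lam n v1 none ≤ V α q lam n (v1 + 1) none) ∧
    (∀ v1 v2 v2' : ℕ, 1 ≤ v1 → 1 ≤ v2 → v2 < v2' → v2' ≤ v1 →
      V α q lam n v1 (some v2) ≤ V α q lam n v1 (some v2')) ∧
    (∀ v1 v2 : ℕ, 1 ≤ v2 → v2 ≤ v1 →
      V α q lam n v1 (some v2) ≤ V α q lam n v1 none) := by
  have h := ageMonotone_V (lam := lam) hα0.le hq0.le hq1 n
  exact ⟨fun v1 _ => ⟨fun v2 _ hv => h.succ_some v1 v2 hv, h.monotone_none v1.le_succ⟩,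
    fun v1 v2 v2' _ _ hlt hle => h.some_mono v1 v2 v2' hlt.le hle,
    fun v1 v2 _ hv => h.some_le_none v1 v2 hv⟩

/-- Monotonicity of the value-iteration iterates: increasing in the monitor age
`v1`, increasing in the finite packet age `v2`, and dominated by the
no-packet state. -/
theorem V_monotone (α q lam : ℝ) (hα0 : 0 < α) (hα1 : α < 1)
    (hq0 : 0 < q) (hq1 : q ≤ 1) (hlam : 0 ≤ lam) (n : ℕ) :
    (∀ v1 : ℕ, 1 ≤ v1 →
      (∀ v2 : ℕ, 1 ≤ v2 → v2 ≤ v1 →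
        V α q lam n v1 (some v2) ≤ V α q lam n (v1 + 1) (some v2)) ∧
      V α q lam n v1 none ≤ V α q lam n (v1 + 1) none) ∧
    (∀ v1 v2 v2' : ℕ, 1 ≤ v1 → 1 ≤ v2 → v2 < v2' → v2' ≤ v1 →
      V α q lam n v1 (some v2) ≤ V α q lam n v1 (some v2')) ∧
    (∀ v1 v2 : ℕ, 1 ≤ v2 → v2 ≤ v1 →
      V α q lam n v1 (some v2) ≤ V α q lam n v1 none) :=
  V_monotone_general α q lam hα0 hq0 hq1 n
end

section
/- For all n ∈ ℕ and all v1 ≥ 1, the value-iteration iterates satisfy V_n(v1, ∞) = V_n(v1, v1). In words: for the discounted value function, the transmitter having no packet is equivalent to the transmitter holding a packet whose age equals the age of the monitor. -/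
/-- For the value-iteration iterates, the transmitter having no packet is
equivalent to it holding a packet whose age equals the monitor age:
`V_n(v1, ∞) = V_n(v1, v1)`. -/
theorem V_none_eq_diag (α q lam : ℝ) (hα0 : 0 < α) (hα1 : α < 1)
    (hq0 : 0 < q) (hq1 : q ≤ 1) (hlam : 0 ≤ lam) :
    ∀ n : ℕ, ∀ v1 : ℕ, 1 ≤ v1 →
      V α q lam n v1 none = V α q lam n v1 (some v1) := by
  intro n
  induction n with
  | zero => intro v1 _; simp [V]
  | succ n ih =>
    intro v1 hv1
    have h := ih (v1 + 1) (by omega)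
    simp only [V]
    congr 2
    rw [← h]
    ring
end

section
/- If λ = 0, then for all n ∈ ℕ and every state s = (v1, v2), the action-value of sampling is at most that of not sampling: V_{n+1}(s; 1) ≤ V_{n+1}(s; 0), where V_{n+1}(s; 1) = v1 + α[(1−q)V_n(v1+1, 1) + q·V_n(1, ∞)] and V_{n+1}(s; 0) is the no-sample branch. Consequently, when sampling is free, always sampling is optimal for every value-iteration stage. -/
lemma V_mono (α q : ℝ) (hα : 0 ≤ α) (hq0 : 0 ≤ q) (hq1 : q ≤ 1) : ∀ n : ℕ,
    (∀ v1 v1' w w' : ℕ, v1 ≤ v1' → w ≤ w' →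
      V α q 0 n v1 (some w) ≤ V α q 0 n v1' (some w')) ∧
    (∀ v1 v1' : ℕ, v1 ≤ v1' → V α q 0 n v1 none ≤ V α q 0 n v1' none) ∧
    (∀ v1 w : ℕ, w ≤ v1 → V α q 0 n v1 (some w) ≤ V α q 0 n v1 none) := by
  have h1q : 0 ≤ 1 - q := by linarith
  intro n
  induction n with
  | zero => refine ⟨?_, ?_, ?_⟩ <;> intros <;> simp [V]
  | succ n ih =>
    obtain ⟨ih1, ih2, ih3⟩ := ih
    have hS : ∀ v1 v1' : ℕ, v1 ≤ v1' →
        (0 : ℝ) + α * ((1 - q) * V α q 0 n (v1 + 1) (some 1) + q * V α q 0 n 1 none) ≤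
        0 + α * ((1 - q) * V α q 0 n (v1' + 1) (some 1) + q * V α q 0 n 1 none) := by
      intro v1 v1' h
      have := ih1 (v1 + 1) (v1' + 1) 1 1 (by omega) le_rfl
      nlinarith [mul_le_mul_of_nonneg_left this h1q, mul_le_mul_of_nonneg_left (mul_le_mul_of_nonneg_left this h1q) hα]
    refine ⟨?_, ?_, ?_⟩
    · intro v1 v1' w w' h hw
      simp only [V]
      gcongr ?_ + ?_
      · exact_mod_cast h
      refine min_le_min (hS v1 v1' h) ?_
      have h1 := ih1 (v1 + 1) (v1' + 1) (w + 1) (w' + 1) (by omega) (by omega)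
      have h2 := ih2 (w + 1) (w' + 1) (by omega)
      nlinarith [mul_le_mul_of_nonneg_left (add_le_add (mul_le_mul_of_nonneg_left h1 h1q) (mul_le_mul_of_nonneg_left h2 hq0)) hα]
    · intro v1 v1' h
      simp only [V]
      gcongr ?_ + ?_
      · exact_mod_cast h
      refine min_le_min (hS v1 v1' h) ?_
      have := ih2 (v1 + 1) (v1' + 1) (by omega)
      nlinarith [mul_le_mul_of_nonneg_left (mul_le_mul_of_nonneg_left this hq0) hα, mul_le_mul_of_nonneg_left (mul_le_mul_of_nonneg_left this h1q) hα]
    · intro v1 w hw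
      simp only [V]
      gcongr (v1 : ℝ) + ?_
      refine min_le_min le_rfl ?_
      have h1 := ih3 (v1 + 1) (w + 1) (by omega)
      have h2 := ih2 (w + 1) (v1 + 1) (by omega)
      nlinarith [mul_le_mul_of_nonneg_left (add_le_add (mul_le_mul_of_nonneg_left h1 h1q) (mul_le_mul_of_nonneg_left h2 hq0)) hα]

/-- When sampling is free (`λ = 0`), the sampling action-value never exceeds
the no-sampling action-value at every value-iteration stage, for every state:
always sampling is optimal. -/
theorem sample_optimal_when_free (α q : ℝ) (hα0 : 0 < α) (hα1 : α < 1)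
    (hq0 : 0 < q) (hq1 : q ≤ 1) :
    ∀ n : ℕ, ∀ v1 : ℕ, 1 ≤ v1 → ∀ v2 : Option ℕ,
      (∀ w, v2 = some w → 1 ≤ w ∧ w ≤ v1) →
      (v1 : ℝ) + ((0 : ℝ) + α * ((1 - q) * V α q 0 n (v1 + 1) (some 1) +
          q * V α q 0 n 1 none)) ≤
        (v1 : ℝ) + (match v2 with
          | some w => α * ((1 - q) * V α q 0 n (v1 + 1) (some (w + 1)) +
              q * V α q 0 n (w + 1) none)
          | none => α * V α q 0 n (v1 + 1) none) := by
  intro n v1 hv1 v2 hv2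
  obtain ⟨m1, m2, m3⟩ := V_mono α q hα0.le hq0.le hq1 n
  have h1q : 0 ≤ 1 - q := by linarith
  match v2 with
  | some w =>
    obtain ⟨hw1, hw2⟩ := hv2 w rfl
    have h1 := m1 (v1 + 1) (v1 + 1) 1 (w + 1) le_rfl (by omega)
    have h2 := m2 1 (w + 1) (by omega)
    simp only
    nlinarith [mul_le_mul_of_nonneg_left (add_le_add (mul_le_mul_of_nonneg_left h1 h1q) (mul_le_mul_of_nonneg_left h2 hq0.le)) hα0.le]
  | none =>
    have h1 := m3 (v1 + 1) 1 (by omega)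
    have h2 := m2 1 (v1 + 1) (by omega)
    simp only
    nlinarith [mul_le_mul_of_nonneg_left (add_le_add (mul_le_mul_of_nonneg_left h1 h1q) (mul_le_mul_of_nonneg_left h2 hq0.le)) hα0.le]
end

section
/- For all n ∈ ℕ, all v1 ≥ 1 and any finite v2, v2' with v2 ≤ v1, v2' ≤ v1', the forward differences of the iterates in the first coordinate agree: V_n(v1+1, v2) − V_n(v1, v2) = V_n(v1'+1, v2') − V_n(v1', v2'). That is, the increment of the value function in the monitor age is the same across all states in which the transmitter holds a packet. -/
/-- Slope sequence. -/
noncomputable def Vslope (α q : ℝ) : ℕ → ℝ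
  | 0 => 0
  | n + 1 => 1 + α * (1 - q) * Vslope α q n

lemma V_linear (α q lam : ℝ) :
    ∀ n v1 w, V α q lam n v1 (some w) =
      Vslope α q n * v1 + V α q lam n 0 (some w) := by
  intro n
  induction n with
  | zero => intro v1 w; simp [V, Vslope]
  | succ n ih =>
    intro v1 w
    have h1 := ih (v1 + 1) 1
    have h2 := ih (v1 + 1) (w + 1)
    have h1' := ih 1 1
    have h2' := ih 1 (w + 1)
    simp only [V, Vslope]
    rw [h1, h2, h1', h2']
    set c1 := V α q lam n 0 (some 1)
    set c2 := V α q lam n 0 (some (w + 1))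
    set d1 := V α q lam n 1 none
    set d2 := V α q lam n (w + 1) none
    set A := Vslope α q n
    have key : ∀ t x y : ℝ,
        min (t + x) (t + y) = t + min x y := fun t x y => min_add_add_left t x y
    have e1 : lam + α * ((1 - q) * (A * (↑(v1 + 1)) + c1) + q * d1)
        = α * (1 - q) * A * (v1 + 1) + (lam + α * ((1 - q) * c1 + q * d1)) := by
      push_cast; ring
    have e2 : α * ((1 - q) * (A * (↑(v1 + 1)) + c2) + q * d2)
        = α * (1 - q) * A * (v1 + 1) + (α * ((1 - q) * c2 + q * d2)) := by
      push_cast; ring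
    have e1' : lam + α * ((1 - q) * (A * ((1 : ℕ) : ℝ) + c1) + q * d1)
        = α * (1 - q) * A * 1 + (lam + α * ((1 - q) * c1 + q * d1)) := by
      push_cast; ring
    have e2' : α * ((1 - q) * (A * ((1 : ℕ) : ℝ) + c2) + q * d2)
        = α * (1 - q) * A * 1 + (α * ((1 - q) * c2 + q * d2)) := by
      push_cast; ring
    rw [e1, e2, e1', e2', key, key]
    push_cast
    ring

/-- The forward difference of the value-iteration iterates in the monitor age
is the same across all states in which the transmitter holds a (finite-age)
packet. -/
theorem V_increment_independent (α q lam : ℝ) (hα0 : 0 < α) (hα1 : α < 1)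
    (hq0 : 0 < q) (hq1 : q ≤ 1) (hlam : 0 ≤ lam) :
    ∀ n : ℕ, ∀ v1 v1' v2 v2' : ℕ, 1 ≤ v1 → 1 ≤ v1' →
      1 ≤ v2 → v2 ≤ v1 → 1 ≤ v2' → v2' ≤ v1' →
      V α q lam n (v1 + 1) (some v2) - V α q lam n v1 (some v2) =
        V α q lam n (v1' + 1) (some v2') - V α q lam n v1' (some v2') := by
  intro n v1 v1' v2 v2' _ _ _ _ _ _
  rw [V_linear α q lam n (v1 + 1) v2, V_linear α q lam n v1 v2,
    V_linear α q lam n (v1' + 1) v2', V_linear α q lam n v1' v2']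
  push_cast
  ring
end

section
/- For all n ∈ ℕ and all states (v1, v2), the forward difference in the monitor age is bounded: V_n(v1+1, v2) − V_n(v1, v2) ≤ 1/(1−α) + 1/(1−α(1−q)). -/
/-!
Both actions send age `v1` to `v1 + 1` or reset it, and the reset term `q · V_n(·, ∞)` does not
depend on `v1`.  So `V_{n+1}(v1+1, ·) − V_{n+1}(v1, ·)` is at most `1` plus `α` times a
sub-convex combination of increments of `V_n` in the age.  Hence any `D ≥ 0` with `1 + α D ≤ D`,
i.e. `D ≥ 1 / (1 − α)`, bounds the increments of all iterates, and the claimed constant is such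
a `D`.
-/

lemma one_add_mul_le_of_one_div_sub_le {α D : ℝ} (hα : α < 1) (hD : 1 / (1 - α) ≤ D) :
    1 + α * D ≤ D := by
  rw [div_le_iff₀ (sub_pos.mpr hα)] at hD
  linarith

lemma min_le_min_add {a a' b b' c : ℝ} (ha : a' ≤ a + c) (hb : b' ≤ b + c) :
    min a' b' ≤ min a b + c :=
  (min_add_add_right a b c) ▸ min_le_min ha hb

lemma mul_convex_comb_le_add {α q D x x' y : ℝ} (hα : 0 ≤ α) (hq0 : 0 ≤ q) (hq1 : q ≤ 1)
    (hD : 0 ≤ D) (hx : x' - x ≤ D) :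
    α * ((1 - q) * x' + q * y) ≤ α * ((1 - q) * x + q * y) + α * D := by
  have : (1 - q) * (x' - x) ≤ D := by nlinarith
  nlinarith

theorem V_add_one_sub_le {α q lam D : ℝ} (hα : 0 ≤ α) (hq0 : 0 ≤ q) (hq1 : q ≤ 1)
    (hD : 0 ≤ D) (hαD : 1 + α * D ≤ D) (n v1 : ℕ) (v2 : Option ℕ) :
    V α q lam n (v1 + 1) v2 - V α q lam n v1 v2 ≤ D := by
  induction n generalizing v1 v2 with
  | zero => simpa [V] using hD
  | succ n ih =>
    have hsample := mul_convex_comb_le_add (y := V α q lam n 1 none) hα hq0 hq1 hD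
      (ih (v1 + 1) (some 1))
    have hA := (add_le_add_right hsample lam).trans_eq (add_assoc _ _ _).symm
    rcases v2 with _ | w
    · have hwait :
          α * V α q lam n (v1 + 1 + 1) none ≤ α * V α q lam n (v1 + 1) none + α * D := by
        nlinarith [ih (v1 + 1) none]
      simp only [V]
      push_cast
      linarith [min_le_min_add hA hwait]
    · have hwait := mul_convex_comb_le_add (y := V α q lam n (w + 1) none) hα hq0 hq1 hD
        (ih (v1 + 1) (some (w + 1)))
      simp only [V]
      push_cast
      linarith [min_le_min_add hA hwait]

theorem V_increment_bounded_general (α q lam : ℝ) (hα0 : 0 < α) (hα1 : α < 1)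
    (hq0 : 0 < q) (hq1 : q ≤ 1) :
    ∀ n : ℕ, ∀ v1 : ℕ, 1 ≤ v1 → ∀ v2 : Option ℕ,
      (∀ w, v2 = some w → 1 ≤ w ∧ w ≤ v1) →
      V α q lam n (v1 + 1) v2 - V α q lam n v1 v2 ≤
        1 / (1 - α) + 1 / (1 - α * (1 - q)) := by
  intro n v1 _ v2 _
  have h1 : 0 < 1 - α := sub_pos.mpr hα1
  have h2 : 0 < 1 - α * (1 - q) := by nlinarith
  refine V_add_one_sub_le hα0.le hq0.le hq1 (by positivity) ?_ n v1 v2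
  exact one_add_mul_le_of_one_div_sub_le hα1 (le_add_of_nonneg_right (by positivity))

/-- Uniform bound on the forward difference of the iterates in the monitor
age: `V_n(v1+1, v2) − V_n(v1, v2) ≤ 1/(1−α) + 1/(1−α(1−q))`. -/
theorem V_increment_bounded (α q lam : ℝ) (hα0 : 0 < α) (hα1 : α < 1)
    (hq0 : 0 < q) (hq1 : q ≤ 1) (hlam : 0 ≤ lam) :
    ∀ n : ℕ, ∀ v1 : ℕ, 1 ≤ v1 → ∀ v2 : Option ℕ,
      (∀ w, v2 = some w → 1 ≤ w ∧ w ≤ v1) →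
      V α q lam n (v1 + 1) v2 - V α q lam n v1 v2 ≤
        1 / (1 - α) + 1 / (1 - α * (1 - q)) :=
  V_increment_bounded_general α q lam hα0 hα1 hq0 hq1
end

section
/- Let V(v1, ∞) = lim_{n→∞} V_n(v1, ∞) denote the limiting discounted value function at no-packet states. Then for all v1 ≥ 1, V(v1+1, ∞) − V(v1, ∞) ≥ 1. -/
open Filter

lemma V_mono_s12 (α q lam : ℝ) (hα0 : 0 < α) (hq1 : q ≤ 1) :
    ∀ n v1 v2, V α q lam n v1 v2 ≤ V α q lam n (v1 + 1) v2 := by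
  intro n
  induction n with
  | zero => intro v1 v2; simp [V]
  | succ n ih =>
    intro v1 v2
    have h1 : (0:ℝ) ≤ α * (1 - q) := by nlinarith
    have hA : lam + α * ((1 - q) * V α q lam n (v1 + 1) (some 1) + q * V α q lam n 1 none)
        ≤ lam + α * ((1 - q) * V α q lam n (v1 + 1 + 1) (some 1) + q * V α q lam n 1 none) := by
      have := ih (v1 + 1) (some 1)
      nlinarith
    cases v2 with
    | none =>
      have hB : α * V α q lam n (v1 + 1) none ≤ α * V α q lam n (v1 + 1 + 1) none := by
        have := ih (v1 + 1) none; nlinarith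
      simp only [V]
      push_cast
      linarith [min_le_min hA hB]
    | some w =>
      have hB : α * ((1 - q) * V α q lam n (v1 + 1) (some (w + 1)) + q * V α q lam n (w + 1) none)
          ≤ α * ((1 - q) * V α q lam n (v1 + 1 + 1) (some (w + 1)) + q * V α q lam n (w + 1) none) := by
        have := ih (v1 + 1) (some (w + 1)); nlinarith
      simp only [V]
      push_cast
      linarith [min_le_min hA hB]

lemma V_gap (α q lam : ℝ) (hα0 : 0 < α) (hq1 : q ≤ 1) :
    ∀ n v1 v2, 1 ≤ V α q lam (n + 1) (v1 + 1) v2 - V α q lam (n + 1) v1 v2 := by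
  intro n v1 v2
  have h1 : (0:ℝ) ≤ α * (1 - q) := by nlinarith
  have hA : lam + α * ((1 - q) * V α q lam n (v1 + 1) (some 1) + q * V α q lam n 1 none)
      ≤ lam + α * ((1 - q) * V α q lam n (v1 + 1 + 1) (some 1) + q * V α q lam n 1 none) := by
    have := V_mono_s12 α q lam hα0 hq1 n (v1 + 1) (some 1)
    nlinarith
  cases v2 with
  | none =>
    have hB : α * V α q lam n (v1 + 1) none ≤ α * V α q lam n (v1 + 1 + 1) none := by
      have := V_mono_s12 α q lam hα0 hq1 n (v1 + 1) none; nlinarith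
    simp only [V]
    push_cast
    linarith [min_le_min hA hB]
  | some w =>
    have hB : α * ((1 - q) * V α q lam n (v1 + 1) (some (w + 1)) + q * V α q lam n (w + 1) none)
        ≤ α * ((1 - q) * V α q lam n (v1 + 1 + 1) (some (w + 1)) + q * V α q lam n (w + 1) none) := by
      have := V_mono_s12 α q lam hα0 hq1 n (v1 + 1) (some (w + 1)); nlinarith
    simp only [V]
    push_cast
    linarith [min_le_min hA hB]

/-- For the limiting discounted value function, the increment at no-packet
states is at least 1. -/
theorem Vlim_increment_ge_one (α q lam : ℝ) (hα0 : 0 < α) (hα1 : α < 1)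
    (hq0 : 0 < q) (hq1 : q ≤ 1) (hlam : 0 ≤ lam)
    (Vlim : ℕ → Option ℕ → ℝ)
    (hVlim : ∀ v1 v2, Tendsto (fun n => V α q lam n v1 v2) atTop
      (nhds (Vlim v1 v2))) :
    ∀ v1 : ℕ, 1 ≤ v1 → 1 ≤ Vlim (v1 + 1) none - Vlim v1 none := by
  intro v1 _
  have htend : Tendsto (fun n => V α q lam n (v1 + 1) none - V α q lam n v1 none)
      atTop (nhds (Vlim (v1 + 1) none - Vlim v1 none)) :=
    (hVlim (v1 + 1) none).sub (hVlim v1 none)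
  refine ge_of_tendsto htend ?_
  filter_upwards [eventually_ge_atTop 1] with n hn
  obtain ⟨m, rfl⟩ := Nat.exists_eq_add_of_le hn
  rw [Nat.add_comm]; exact V_gap α q lam hα0 hq1 m v1 none
end

section
/- For every no-packet state s = (v1, ∞) with v1 ≥ 1, there exists λ ≥ 0 such that the two action-values of the limiting discounted value function coincide: V((v1,∞), λ; 0) = V((v1,∞), λ; 1), i.e., λ + α[(1−q)V(v1+1, 1; λ) + q·V(1, ∞; λ)] = α·V(v1+1, ∞; λ). -/
open Filter Set

variable {α q : ℝ}

theorem discounted_mix_mono (hα : 0 ≤ α) (hq0 : 0 ≤ q) (hq1 : q ≤ 1) {a a' b b' : ℝ}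
    (ha : a ≤ a') (hb : b ≤ b') : α * ((1 - q) * a + q * b) ≤ α * ((1 - q) * a' + q * b') :=
  mul_le_mul_of_nonneg_left (add_le_add (mul_le_mul_of_nonneg_left ha (sub_nonneg.2 hq1))
    (mul_le_mul_of_nonneg_left hb hq0)) hα

theorem discounted_mix_le (hα : 0 ≤ α) (hq0 : 0 ≤ q) (hq1 : q ≤ 1) {a b c : ℝ}
    (ha : a ≤ c) (hb : b ≤ c) : α * ((1 - q) * a + q * b) ≤ α * c :=
  (discounted_mix_mono hα hq0 hq1 ha hb).trans_eq (by ring)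

theorem discounted_mix_nonneg (hα : 0 ≤ α) (hq0 : 0 ≤ q) (hq1 : q ≤ 1) {a b : ℝ}
    (ha : 0 ≤ a) (hb : 0 ≤ b) : 0 ≤ α * ((1 - q) * a + q * b) := by
  have hq : 0 ≤ 1 - q := sub_nonneg.2 hq1
  positivity

section Iterates

variable {lam : ℝ}

theorem V_nonneg (hα : 0 ≤ α) (hq0 : 0 ≤ q) (hq1 : q ≤ 1) (hlam : 0 ≤ lam) (n : ℕ) :
    ∀ v1 v2, 0 ≤ V α q lam n v1 v2 := by
  induction n with
  | zero => intro _ _; rfl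
  | succ n ih =>
    have hsample (v1 : ℕ) := add_nonneg hlam
      (discounted_mix_nonneg hα hq0 hq1 (ih (v1 + 1) (some 1)) (ih 1 none))
    rintro v1 (_ | w) <;> simp only [V]
    · exact add_nonneg v1.cast_nonneg (le_min (hsample v1) (mul_nonneg hα (ih _ _)))
    · exact add_nonneg v1.cast_nonneg
        (le_min (hsample v1) (discounted_mix_nonneg hα hq0 hq1 (ih _ _) (ih _ _)))

theorem V_monotone_s16 (hα : 0 ≤ α) (hq0 : 0 ≤ q) (hq1 : q ≤ 1) (n : ℕ) (v2 : Option ℕ) :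
    Monotone fun v1 => V α q lam n v1 v2 := by
  induction n generalizing v2 with
  | zero => intro _ _ _; rfl
  | succ n ih =>
    intro v1 v1' h
    have h' : v1 + 1 ≤ v1' + 1 := by omega
    have hsample := discounted_mix_mono hα hq0 hq1 (ih (some 1) h') (le_refl (V α q lam n 1 none))
    rcases v2 with _ | w <;> simp only [V] <;>
      refine add_le_add (Nat.cast_le.2 h) (min_le_min (add_le_add le_rfl hsample) ?_)
    · exact mul_le_mul_of_nonneg_left (ih none h') hα
    · exact discounted_mix_mono hα hq0 hq1 (ih (some (w + 1)) h') le_rfl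

theorem V_some_le_none (hα : 0 ≤ α) (hq0 : 0 ≤ q) (hq1 : q ≤ 1) (n : ℕ) :
    ∀ v1 w, w ≤ v1 → V α q lam n v1 (some w) ≤ V α q lam n v1 none := by
  induction n with
  | zero => intro _ _ _; rfl
  | succ n ih =>
    intro v1 w hw
    simp only [V]
    refine add_le_add le_rfl (min_le_min le_rfl ?_)
    exact discounted_mix_le hα hq0 hq1 (ih (v1 + 1) (w + 1) (by omega))
      (V_monotone_s16 hα hq0 hq1 n none (show w + 1 ≤ v1 + 1 by omega))

/-- The bound is the cost of never sampling, the solution of `C v = v + α C (v + 1)`. -/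
theorem V_none_le (hα : 0 ≤ α) (hα1 : α < 1) (n : ℕ) :
    ∀ v1, V α q lam n v1 none ≤ v1 / (1 - α) + α / (1 - α) ^ 2 := by
  have hα1' : 0 < 1 - α := sub_pos.2 hα1
  induction n with
  | zero => intro v1; simp only [V]; positivity
  | succ n ih =>
    intro v1
    have hwait := min_le_right (lam + α * ((1 - q) * V α q lam n (v1 + 1) (some 1) +
      q * V α q lam n 1 none)) (α * V α q lam n (v1 + 1) none)
    have hnext := mul_le_mul_of_nonneg_left (ih (v1 + 1)) hα
    have hfix : (v1 : ℝ) + α * (↑(v1 + 1) / (1 - α) + α / (1 - α) ^ 2) =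
        v1 / (1 - α) + α / (1 - α) ^ 2 := by
      push_cast; field_simp; ring
    simp only [V]
    linarith

theorem V_le_V_add (hα : 0 ≤ α) (hα1 : α < 1) (hq0 : 0 ≤ q) (hq1 : q ≤ 1) (lam' : ℝ)
    (n : ℕ) : ∀ v1 v2, V α q lam' n v1 v2 ≤ V α q lam n v1 v2 + |lam' - lam| / (1 - α) := by
  set D := |lam' - lam| / (1 - α)
  have hD0 : 0 ≤ D := div_nonneg (abs_nonneg _) (sub_pos.2 hα1).le
  have hD : |lam' - lam| + α * D = D := by
    have : 1 - α ≠ 0 := (sub_pos.2 hα1).ne'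
    simp only [D]; field_simp; ring
  have hmix {a a' b b' : ℝ} (ha : a' ≤ a + D) (hb : b' ≤ b + D) :
      α * ((1 - q) * a' + q * b') ≤ α * ((1 - q) * a + q * b) + α * D :=
    (discounted_mix_mono hα hq0 hq1 ha hb).trans_eq (by ring)
  induction n with
  | zero => intro _ _; simpa only [V, zero_add] using hD0
  | succ n ih =>
    intro v1 v2
    have hsample : lam' + α * ((1 - q) * V α q lam' n (v1 + 1) (some 1) +
        q * V α q lam' n 1 none) ≤ lam + α * ((1 - q) * V α q lam n (v1 + 1) (some 1) +
        q * V α q lam n 1 none) + D := by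
      linarith [hmix (ih (v1 + 1) (some 1)) (ih 1 none), le_abs_self (lam' - lam)]
    have hαD : α * D ≤ D := mul_le_of_le_one_left hD0 hα1.le
    rcases v2 with _ | w <;> simp only [V] <;> rw [add_assoc, ← min_add_add_right] <;>
      refine add_le_add le_rfl (min_le_min hsample ?_)
    · linarith [mul_le_mul_of_nonneg_left (ih (v1 + 1) none) hα]
    · linarith [hmix (ih (v1 + 1) (some (w + 1))) (ih (w + 1) none)]

end Iterates

def IsValueLimit (α q : ℝ) (W : ℝ → ℕ → Option ℕ → ℝ) : Prop :=
  ∀ lam : ℝ, 0 ≤ lam → ∀ v1 v2, Tendsto (fun n => V α q lam n v1 v2) atTop (nhds (W lam v1 v2))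

namespace IsValueLimit

variable {W : ℝ → ℕ → Option ℕ → ℝ} {lam : ℝ}

theorem le_of_forall_le (hW : IsValueLimit α q W) (hlam : 0 ≤ lam) {a c : ℕ}
    {b d : Option ℕ} (h : ∀ n, V α q lam n a b ≤ V α q lam n c d) : W lam a b ≤ W lam c d :=
  le_of_tendsto_of_tendsto' (hW lam hlam a b) (hW lam hlam c d) h

theorem nonneg (hW : IsValueLimit α q W) (hα : 0 ≤ α) (hq0 : 0 ≤ q) (hq1 : q ≤ 1)
    (hlam : 0 ≤ lam) (v1 : ℕ) (v2 : Option ℕ) : 0 ≤ W lam v1 v2 :=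
  ge_of_tendsto' (hW lam hlam v1 v2) fun n => V_nonneg hα hq0 hq1 hlam n v1 v2

theorem none_le (hW : IsValueLimit α q W) (hα : 0 ≤ α) (hα1 : α < 1) (hlam : 0 ≤ lam)
    (v1 : ℕ) : W lam v1 none ≤ v1 / (1 - α) + α / (1 - α) ^ 2 :=
  le_of_tendsto' (hW lam hlam v1 none) fun n => V_none_le hα hα1 n v1

theorem continuousOn (hW : IsValueLimit α q W) (hα : 0 ≤ α) (hα1 : α < 1) (hq0 : 0 ≤ q)
    (hq1 : q ≤ 1) (v1 : ℕ) (v2 : Option ℕ) : ContinuousOn (fun lam => W lam v1 v2) (Ici 0) := by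
  refine (LipschitzOnWith.of_le_add_mul' (1 / (1 - α)) fun lam' hlam' lam hlam => ?_).continuousOn
  rw [Real.dist_eq, one_div_mul_eq_div]
  exact le_of_tendsto_of_tendsto' (hW lam' hlam' v1 v2) ((hW lam hlam v1 v2).add_const _)
    fun n => V_le_V_add hα hα1 hq0 hq1 lam' n v1 v2

theorem sample_le_wait_zero (hW : IsValueLimit α q W) (hα : 0 ≤ α) (hq0 : 0 ≤ q)
    (hq1 : q ≤ 1) (v1 : ℕ) :
    α * ((1 - q) * W 0 (v1 + 1) (some 1) + q * W 0 1 none) ≤ α * W 0 (v1 + 1) none :=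
  discounted_mix_le hα hq0 hq1
    (hW.le_of_forall_le le_rfl fun n => V_some_le_none hα hq0 hq1 n (v1 + 1) 1 (by omega))
    (hW.le_of_forall_le le_rfl fun n =>
      V_monotone_s16 hα hq0 hq1 n none (show 1 ≤ v1 + 1 by omega))

end IsValueLimit

def samplingGap (α q : ℝ) (W : ℝ → ℕ → Option ℕ → ℝ) (v1 : ℕ) (lam : ℝ) : ℝ :=
  lam + α * ((1 - q) * W lam (v1 + 1) (some 1) + q * W lam 1 none) - α * W lam (v1 + 1) none

section samplingGap

variable {W : ℝ → ℕ → Option ℕ → ℝ}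

theorem samplingGap_zero_nonpos (hW : IsValueLimit α q W) (hα : 0 ≤ α) (hq0 : 0 ≤ q)
    (hq1 : q ≤ 1) (v1 : ℕ) : samplingGap α q W v1 0 ≤ 0 := by
  have := hW.sample_le_wait_zero hα hq0 hq1 v1
  simp only [samplingGap]
  linarith

theorem exists_samplingGap_nonneg (hW : IsValueLimit α q W) (hα : 0 ≤ α) (hα1 : α < 1)
    (hq0 : 0 ≤ q) (hq1 : q ≤ 1) (v1 : ℕ) : ∃ Λ, 0 ≤ Λ ∧ 0 ≤ samplingGap α q W v1 Λ := by
  set Λ := α * (↑(v1 + 1) / (1 - α) + α / (1 - α) ^ 2)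
  have hΛ : 0 ≤ Λ := mul_nonneg hα (add_nonneg (div_nonneg (by positivity) (sub_pos.2 hα1).le)
    (div_nonneg hα (sq_nonneg _)))
  refine ⟨Λ, hΛ, ?_⟩
  have hwait := mul_le_mul_of_nonneg_left (hW.none_le hα hα1 hΛ (v1 + 1)) hα
  have hsample := discounted_mix_nonneg hα hq0 hq1 (hW.nonneg hα hq0 hq1 hΛ (v1 + 1) (some 1))
    (hW.nonneg hα hq0 hq1 hΛ 1 none)
  simp only [samplingGap]
  linarith

theorem continuousOn_samplingGap (hW : IsValueLimit α q W) (hα : 0 ≤ α) (hα1 : α < 1)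
    (hq0 : 0 ≤ q) (hq1 : q ≤ 1) (v1 : ℕ) : ContinuousOn (samplingGap α q W v1) (Ici 0) := by
  have hcont := hW.continuousOn hα hα1 hq0 hq1
  unfold samplingGap
  fun_prop

end samplingGap

theorem exists_indifference_lambda_general (α q : ℝ) (hα0 : 0 < α) (hα1 : α < 1)
    (hq0 : 0 < q) (hq1 : q < 1)
    (Vlim : ℝ → ℕ → Option ℕ → ℝ)
    (hVlim : ∀ lam : ℝ, 0 ≤ lam → ∀ v1 v2,
      Tendsto (fun n => V α q lam n v1 v2) atTop (nhds (Vlim lam v1 v2)))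
    (v1 : ℕ) :
    ∃ lam : ℝ, 0 ≤ lam ∧
      lam + α * ((1 - q) * Vlim lam (v1 + 1) (some 1) +
        q * Vlim lam 1 none) = α * Vlim lam (v1 + 1) none := by
  have hW : IsValueLimit α q Vlim := hVlim
  obtain ⟨Λ, hΛ, hgapΛ⟩ := exists_samplingGap_nonneg hW hα0.le hα1 hq0.le hq1.le v1
  obtain ⟨lam, hlam, hgap⟩ := intermediate_value_Icc hΛ
    ((continuousOn_samplingGap hW hα0.le hα1 hq0.le hq1.le v1).mono Icc_subset_Ici_self)
    ⟨samplingGap_zero_nonpos hW hα0.le hq0.le hq1.le v1, hgapΛ⟩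
  exact ⟨lam, hlam.1, sub_eq_zero.1 hgap⟩

/-- For every no-packet state `(v1, ∞)` there is a multiplier `λ ≥ 0` at
which the two action-values of the limiting discounted value function
coincide. -/
theorem exists_indifference_lambda (α q : ℝ) (hα0 : 0 < α) (hα1 : α < 1)
    (hq0 : 0 < q) (hq1 : q < 1)
    (Vlim : ℝ → ℕ → Option ℕ → ℝ)
    (hVlim : ∀ lam : ℝ, 0 ≤ lam → ∀ v1 v2,
      Tendsto (fun n => V α q lam n v1 v2) atTop (nhds (Vlim lam v1 v2)))
    (v1 : ℕ) (hv1 : 1 ≤ v1) :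
    ∃ lam : ℝ, 0 ≤ lam ∧
      lam + α * ((1 - q) * Vlim lam (v1 + 1) (some 1) +
        q * Vlim lam 1 none) = α * Vlim lam (v1 + 1) none :=
  exists_indifference_lambda_general α q hα0 hα1 hq0 hq1 Vlim hVlim v1
end
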